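/- Let n ≥ 2. Identify a polynomial vector field on ℂ^{n+1} with a polynomial map V : ℂ^{n+1} → ℂ^{n+1}, with Lie bracket [V, W](z) = DW(z)·V(z) − DV(z)·W(z), where DV(z) is the derivative (Jacobian) of V at z. Define the three vector fields: A(z) has first component (i/4)(z_1² − 1), second component (i/2) z_{n+1}, last component (i/2) z_1 z_{n+1}, and all other components 0; B(z) has first component z_1, last component z_{n+1}, and all other components 0; C(z) has first component (i/4) z_1², second component (i/2) z_{n+1}, last component (i/2) z_1 z_{n+1}, and all other components 0. Then [B, C] = C, [A, C] = (1/8)·B, and [B, A] = 2C − A; moreover A, B, C are linearly independent over ℝ, so their real span is a 3-dimensional real Lie algebra of vector fields, which is isomorphic to sl(2, ℝ). -/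

import Mathlib

/-!
Every field involved lies in the family `quadField n p q r`, whose first component is the
quadratic field `p z₁² + q z₁ + r` on the line and whose other components are determined by
`p` and `q`. On this family the bracket is that of the first components, `f g' - g f'`
(`vfBracket_quadField`). Quadratic vector fields on the line are the infinitesimal Möbius
transformations, a copy of `sl(2)`, and `[[a, b], [c, -a]] ↦ quadField n (i b / 4) (2 a) (4 i c)`
is a Lie embedding of `sl(2, ℝ)` with image the real span of `A`, `B`, `C`. Every claim thus
reduces to identities between coefficients.
-/

/-- The Lie bracket of (polynomial) vector fields on `ℂ^{n+1}`, viewed as maps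
`V : ℂ^{n+1} → ℂ^{n+1}`: `[V, W](z) = DW(z)·V(z) − DV(z)·W(z)`. -/
noncomputable def vfBracket (n : ℕ)
    (V W : (Fin (n + 1) → ℂ) → (Fin (n + 1) → ℂ)) :
    (Fin (n + 1) → ℂ) → (Fin (n + 1) → ℂ) :=
  fun z => fderiv ℂ W z (V z) - fderiv ℂ V z (W z)

/-- The vector field `A` with first component `(i/4)(z₁² − 1)`, second component
`(i/2) z_{n+1}`, last component `(i/2) z₁ z_{n+1}`, and all others `0`. -/
noncomputable def fieldA (n : ℕ) : (Fin (n + 1) → ℂ) → (Fin (n + 1) → ℂ) := fun z i =>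
  if (i : ℕ) = 0 then (Complex.I / 4) * ((z 0) ^ 2 - 1)
  else if (i : ℕ) = 1 then (Complex.I / 2) * z (Fin.last n)
  else if (i : ℕ) = n then (Complex.I / 2) * z 0 * z (Fin.last n)
  else 0

/-- The vector field `B` with first component `z₁`, last component `z_{n+1}`,
and all others `0`. -/
def fieldB (n : ℕ) : (Fin (n + 1) → ℂ) → (Fin (n + 1) → ℂ) := fun z i =>
  if (i : ℕ) = 0 then z 0
  else if (i : ℕ) = n then z (Fin.last n)
  else 0

/-- The vector field `C` with first component `(i/4) z₁²`, second component
`(i/2) z_{n+1}`, last component `(i/2) z₁ z_{n+1}`, and all others `0`. -/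
noncomputable def fieldC (n : ℕ) : (Fin (n + 1) → ℂ) → (Fin (n + 1) → ℂ) := fun z i =>
  if (i : ℕ) = 0 then (Complex.I / 4) * (z 0) ^ 2
  else if (i : ℕ) = 1 then (Complex.I / 2) * z (Fin.last n)
  else if (i : ℕ) = n then (Complex.I / 2) * z 0 * z (Fin.last n)
  else 0

open Complex ContinuousLinearMap LieAlgebra.SpecialLinear

theorem LieAlgebra.SpecialLinear.sl_fin_two_apply_one_one {R : Type*} [CommRing R]
    (M : sl (Fin 2) R) : M.1 1 1 = -M.1 0 0 := by
  have h : Matrix.trace M.1 = 0 := M.2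
  rw [Matrix.trace_fin_two] at h
  linear_combination h

-- For `n = 1` the second and the last coordinate coincide, and the family is not closed under
-- the bracket.
noncomputable def quadField (n : ℕ) (p q r : ℂ) :
    (Fin (n + 1) → ℂ) → (Fin (n + 1) → ℂ) := fun z i =>
  if (i : ℕ) = 0 then p * z 0 ^ 2 + q * z 0 + r
  else if (i : ℕ) = 1 then 2 * p * z (Fin.last n)
  else if (i : ℕ) = n then (2 * p * z 0 + q) * z (Fin.last n)
  else 0

noncomputable def quadFieldFDeriv (n : ℕ) (p q : ℂ) (z : Fin (n + 1) → ℂ) :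
    (Fin (n + 1) → ℂ) →L[ℂ] (Fin (n + 1) → ℂ) :=
  pi fun i =>
    if (i : ℕ) = 0 then (2 * p * z 0 + q) • proj 0
    else if (i : ℕ) = 1 then (2 * p) • proj (Fin.last n)
    else if (i : ℕ) = n then
      (2 * p * z (Fin.last n)) • proj 0 + (2 * p * z 0 + q) • proj (Fin.last n)
    else 0

section quadField

variable {n : ℕ}

theorem quadField_add (p q r p' q' r' : ℂ) :
    quadField n p q r + quadField n p' q' r' = quadField n (p + p') (q + q') (r + r') := by
  funext z i
  simp only [quadField, Pi.add_apply]
  split_ifs <;> ring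

theorem quadField_sub (p q r p' q' r' : ℂ) :
    quadField n p q r - quadField n p' q' r' = quadField n (p - p') (q - q') (r - r') := by
  funext z i
  simp only [quadField, Pi.sub_apply]
  split_ifs <;> ring

theorem real_smul_quadField (a : ℝ) (p q r : ℂ) :
    a • quadField n p q r = quadField n (a * p) (a * q) (a * r) := by
  funext z i
  simp only [quadField, Pi.smul_apply, real_smul]
  split_ifs <;> ring

theorem quadField_eq_zero_iff {p q r : ℂ} :
    quadField n p q r = 0 ↔ p = 0 ∧ q = 0 ∧ r = 0 := by
  refine ⟨fun h => ?_, fun ⟨hp, hq, hr⟩ => by funext z i; simp [quadField, hp, hq, hr]⟩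
  have first (t : ℂ) : p * t ^ 2 + q * t + r = 0 := by
    simpa [quadField] using congrFun (congrFun h fun _ => t) 0
  have h0 := first 0
  have h1 := first 1
  have h2 := first (-1)
  exact ⟨by linear_combination (h1 + h2) / 2 - h0, by linear_combination (h1 - h2) / 2,
    by linear_combination h0⟩

theorem hasFDerivAt_quadField (p q r : ℂ) (z : Fin (n + 1) → ℂ) :
    HasFDerivAt (quadField n p q r) (quadFieldFDeriv n p q z) z := by
  rw [hasFDerivAt_pi']
  intro i
  have h0 := hasFDerivAt_apply (𝕜 := ℂ) (0 : Fin (n + 1)) z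
  have hN := hasFDerivAt_apply (𝕜 := ℂ) (Fin.last n) z
  simp only [quadField, quadFieldFDeriv, proj_pi]
  split_ifs
  · refine ((((h0.pow 2).const_mul p).add (h0.const_mul q)).add_const r).congr_fderiv ?_
    ext v
    simp only [add_apply, smul_apply, proj_apply, smul_eq_mul, nsmul_eq_mul, Nat.cast_ofNat,
      Nat.add_one_sub_one, pow_one]
    ring
  · exact hN.const_mul (2 * p)
  · refine (((h0.const_mul (2 * p)).add_const q).mul hN).congr_fderiv ?_
    ext v
    simp only [add_apply, smul_apply, proj_apply, smul_eq_mul]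
    ring
  · exact hasFDerivAt_const 0 z

theorem vfBracket_quadField (hn : n ≠ 1) (p q r p' q' r' : ℂ) :
    vfBracket n (quadField n p q r) (quadField n p' q' r') =
      quadField n (p' * q - p * q') (2 * (p' * r - p * r')) (q' * r - q * r') := by
  funext z i
  simp only [vfBracket, (hasFDerivAt_quadField _ _ _ z).fderiv, quadFieldFDeriv, Pi.sub_apply,
    pi_apply]
  by_cases hi0 : (i : ℕ) = 0
  · simp only [quadField, hi0, ↓reduceIte, smul_apply, proj_apply, smul_eq_mul,
      Fin.coe_ofNat_eq_mod, Nat.zero_mod]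
    ring
  have hn0 : n ≠ 0 := by have := i.isLt; omega
  by_cases hi1 : (i : ℕ) = 1
  · simp only [quadField, hi1, hn0, hn, one_ne_zero, ↓reduceIte, smul_apply, proj_apply,
      smul_eq_mul, Fin.val_last]
    ring
  by_cases hin : (i : ℕ) = n
  · simp only [quadField, hin, hn0, hn, ↓reduceIte, add_apply, smul_apply, proj_apply,
      smul_eq_mul, Fin.val_last, Fin.coe_ofNat_eq_mod, Nat.zero_mod]
    ring
  · simp [quadField, hi0, hi1, hin]

end quadField

section fields

variable {n : ℕ}

theorem fieldA_eq_quadField : fieldA n = quadField n (I / 4) 0 (-(I / 4)) := by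
  funext z i
  simp only [fieldA, quadField]
  split_ifs <;> ring

theorem fieldB_eq_quadField (hn : n ≠ 1) : fieldB n = quadField n 0 1 0 := by
  funext z i
  simp only [fieldB, quadField]
  split_ifs <;> first | omega | ring

theorem fieldC_eq_quadField : fieldC n = quadField n (I / 4) 0 0 := by
  funext z i
  simp only [fieldC, quadField]
  split_ifs <;> ring

theorem vfBracket_fieldB_fieldC (hn : n ≠ 1) : vfBracket n (fieldB n) (fieldC n) = fieldC n := by
  rw [fieldB_eq_quadField hn, fieldC_eq_quadField, vfBracket_quadField hn]
  congr 1 <;> ring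

theorem vfBracket_fieldA_fieldC (hn : n ≠ 1) :
    vfBracket n (fieldA n) (fieldC n) = (1 / 8 : ℝ) • fieldB n := by
  rw [fieldA_eq_quadField, fieldB_eq_quadField hn, fieldC_eq_quadField, vfBracket_quadField hn,
    real_smul_quadField]
  congr 1
  · ring
  · push_cast
    linear_combination (-1 / 8 : ℂ) * I_sq
  · ring

theorem vfBracket_fieldB_fieldA (hn : n ≠ 1) :
    vfBracket n (fieldB n) (fieldA n) = (2 : ℝ) • fieldC n - fieldA n := by
  rw [fieldA_eq_quadField, fieldB_eq_quadField hn, fieldC_eq_quadField, vfBracket_quadField hn,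
    real_smul_quadField, quadField_sub]
  congr 1 <;> push_cast <;> ring

theorem smul_fieldA_add_smul_fieldB_add_smul_fieldC (hn : n ≠ 1) (a b c : ℝ) :
    a • fieldA n + b • fieldB n + c • fieldC n =
      quadField n ((a + c) * (I / 4)) b (-a * (I / 4)) := by
  rw [fieldA_eq_quadField, fieldB_eq_quadField hn, fieldC_eq_quadField, real_smul_quadField,
    real_smul_quadField, real_smul_quadField, quadField_add, quadField_add]
  congr 1 <;> ring

theorem linearIndependent_fieldA_fieldB_fieldC (hn : n ≠ 1) :
    LinearIndependent ℝ ![fieldA n, fieldB n, fieldC n] := by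
  rw [Fintype.linearIndependent_iff]
  intro g hg
  simp only [Fin.sum_univ_three, Matrix.cons_val_zero, Matrix.cons_val_one,
    Matrix.cons_val_two, Matrix.head_cons, Matrix.tail_cons] at hg
  rw [smul_fieldA_add_smul_fieldB_add_smul_fieldC hn, quadField_eq_zero_iff] at hg
  obtain ⟨hp, hq, hr⟩ := hg
  have h0 : g 0 = 0 := by simpa [I_ne_zero] using hr
  have h1 : g 1 = 0 := by exact_mod_cast hq
  have h2 : g 2 = 0 := by simpa [h0, I_ne_zero] using hp
  intro i
  fin_cases i <;> assumption

end fields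

-- `E ↦ C`, `H ↦ 2 B`, `F ↦ 16 (C - A)`.
noncomputable def slToVectorField (n : ℕ) :
    sl (Fin 2) ℝ →ₗ[ℝ] ((Fin (n + 1) → ℂ) → (Fin (n + 1) → ℂ)) where
  toFun M := quadField n (M.1 0 1 * (I / 4)) (2 * M.1 0 0) (M.1 1 0 * (4 * I))
  map_add' M N := by
    simp only [quadField_add, AddMemClass.coe_add, Matrix.add_apply, ofReal_add]
    congr 1 <;> ring
  map_smul' a M := by
    simp only [RingHom.id_apply, real_smul_quadField, SetLike.val_smul, Matrix.smul_apply,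
      smul_eq_mul, ofReal_mul]
    congr 1 <;> ring

section slToVectorField

variable {n : ℕ}

theorem slToVectorField_apply (M : sl (Fin 2) ℝ) :
    slToVectorField n M = quadField n (M.1 0 1 * (I / 4)) (2 * M.1 0 0) (M.1 1 0 * (4 * I)) :=
  rfl

theorem slToVectorField_injective : Function.Injective (slToVectorField n) := by
  rw [injective_iff_map_eq_zero]
  intro M hM
  rw [slToVectorField_apply, quadField_eq_zero_iff] at hM
  obtain ⟨hp, hq, hr⟩ := hM
  have h01 : M.1 0 1 = 0 := by simpa [I_ne_zero] using hp
  have h00 : M.1 0 0 = 0 := by simpa using hq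
  have h10 : M.1 1 0 = 0 := by simpa [I_ne_zero] using hr
  have h11 : M.1 1 1 = 0 := by rw [sl_fin_two_apply_one_one, h00, neg_zero]
  ext i j
  fin_cases i <;> fin_cases j <;> assumption

theorem range_slToVectorField (hn : n ≠ 1) :
    LinearMap.range (slToVectorField n) = Submodule.span ℝ {fieldA n, fieldB n, fieldC n} := by
  ext f
  rw [LinearMap.mem_range, Submodule.mem_span_triple]
  constructor
  · rintro ⟨M, rfl⟩
    refine ⟨-16 * M.1 1 0, 2 * M.1 0 0, M.1 0 1 + 16 * M.1 1 0, ?_⟩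
    rw [smul_fieldA_add_smul_fieldB_add_smul_fieldC hn, slToVectorField_apply]
    congr 1 <;> push_cast <;> ring
  · rintro ⟨a, b, c, rfl⟩
    have htrace : Matrix.trace !![b / 2, a + c; -a / 16, -b / 2] = 0 := by
      simp [Matrix.trace_fin_two, neg_div]
    refine ⟨⟨!![b / 2, a + c; -a / 16, -b / 2], htrace⟩, ?_⟩
    rw [smul_fieldA_add_smul_fieldB_add_smul_fieldC hn, slToVectorField_apply]
    simp only [Matrix.of_apply, Matrix.cons_val', Matrix.cons_val_zero, Matrix.cons_val_one,
      Matrix.cons_val_fin_one, ofReal_add, ofReal_div, ofReal_neg, ofReal_ofNat]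
    congr 1 <;> ring

theorem slToVectorField_lie (hn : n ≠ 1) (X Y : sl (Fin 2) ℝ) :
    slToVectorField n ⁅X, Y⁆ = vfBracket n (slToVectorField n X) (slToVectorField n Y) := by
  rw [slToVectorField_apply, slToVectorField_apply, slToVectorField_apply,
    vfBracket_quadField hn]
  simp only [sl_bracket, Matrix.sub_apply, Matrix.mul_apply, Fin.sum_univ_two,
    sl_fin_two_apply_one_one]
  congr 1
  · push_cast
    ring
  · push_cast
    linear_combination 2 * ((X.1 0 1 : ℂ) * Y.1 1 0 - Y.1 0 1 * X.1 1 0) * I_sq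
  · push_cast
    ring

end slToVectorField

/-- The bracket relations `[B,C] = C`, `[A,C] = (1/8)B`, `[B,A] = 2C − A`; moreover
`A, B, C` are linearly independent over `ℝ`, and their real span is a Lie algebra of
vector fields isomorphic to `sl(2, ℝ)`. -/
theorem sl2_subalgebra_of_fields (n : ℕ) (hn : 2 ≤ n) :
    vfBracket n (fieldB n) (fieldC n) = fieldC n ∧
    vfBracket n (fieldA n) (fieldC n) = (1 / 8 : ℝ) • fieldB n ∧
    vfBracket n (fieldB n) (fieldA n) = (2 : ℝ) • fieldC n - fieldA n ∧
    LinearIndependent ℝ ![fieldA n, fieldB n, fieldC n] ∧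
    ∃ ι : (LieAlgebra.SpecialLinear.sl (Fin 2) ℝ) →ₗ[ℝ]
        ((Fin (n + 1) → ℂ) → (Fin (n + 1) → ℂ)),
      Function.Injective ι ∧
      LinearMap.range ι = Submodule.span ℝ {fieldA n, fieldB n, fieldC n} ∧
      ∀ X Y, ι ⁅X, Y⁆ = vfBracket n (ι X) (ι Y) := by
  have hn1 : n ≠ 1 := by omega
  exact ⟨vfBracket_fieldB_fieldC hn1, vfBracket_fieldA_fieldC hn1, vfBracket_fieldB_fieldA hn1,
    linearIndependent_fieldA_fieldB_fieldC hn1, slToVectorField n, slToVectorField_injective,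
    range_slToVectorField hn1, slToVectorField_lie hn1⟩
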